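/- As formal power series over ℚ, Li_a(z) · Li_b(z) = Li_{a ⧢ b}(z), where a ⧢ b denotes the shuffle product of the words encoding the multi-indices a and b, extended linearly to Li. -/

import Mathlib

/-- `zetaN N [a₁, …, a_r]` is the finite multiple zeta value
`ζ_N(a₁,…,a_r) = Σ_{N ≥ n₁ > ⋯ > n_r ≥ 1} Π 1/nᵢ^{aᵢ}`; `ζ_N` of the empty index is `1`. -/
def zetaN : ℕ → List ℕ → ℚ
  | _, [] => 1
  | N, a :: as => ∑ n ∈ Finset.Icc 1 N, zetaN (n - 1) as / (n : ℚ) ^ a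

/-- The shuffle product of two words, as a multiset of words (counting multiplicities). -/
def shuffle {α : Type*} : List α → List α → Multiset (List α)
  | [], ys => {ys}
  | xs, [] => {xs}
  | x :: xs, y :: ys =>
      ((shuffle xs (y :: ys)).map (x :: ·)) + ((shuffle (x :: xs) ys).map (y :: ·))
termination_by xs ys => xs.length + ys.length

/-- The word `ω₀^{a₁-1} ω₁ ⋯ ω₀^{a_r-1} ω₁` over `{ω₀, ω₁} = {false, true}`
associated to a multi-index. -/
def wordOf (a : List ℕ) : List Bool :=
  a.foldr (fun c w => List.replicate (c - 1) false ++ [true] ++ w) []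

/-- The multi-index associated to a word over `{ω₀, ω₁} = {false, true}`
(inverse of `wordOf` on admissible words). -/
def wordToIndex : List Bool → List ℕ
  | [] => []
  | false :: w =>
      match wordToIndex w with
      | [] => []
      | c :: cs => (c + 1) :: cs
  | true :: w => 1 :: wordToIndex w

/-- The multiple polylogarithm `Li_a(z)` as a formal power series over `ℚ`:
for a nonempty index `a₁ :: as` its `n`-th coefficient is `ζ_{n-1}(as)/n^{a₁}`;
`Li` of the empty index is `1`. -/
noncomputable def Li : List ℕ → PowerSeries ℚ
  | [] => 1
  | a :: as => PowerSeries.mk fun n => if n = 0 then 0 else zetaN (n - 1) as / (n : ℚ) ^ a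

open PowerSeries

/-- The operator `z d/dz` on power series. -/
noncomputable def theta : PowerSeries ℚ →ₗ[ℚ] PowerSeries ℚ where
  toFun f := PowerSeries.mk fun n => n * PowerSeries.coeff n f
  map_add' f g := by ext n; simp [mul_add]
  map_smul' c f := by ext n; simp; ring

lemma coeff_theta (f : PowerSeries ℚ) (n : ℕ) :
    coeff n (theta f) = n * coeff n f := by
  simp [theta]

lemma theta_mul (f g : PowerSeries ℚ) :
    theta (f * g) = theta f * g + f * theta g := by
  ext n
  rw [map_add, coeff_theta, coeff_mul, coeff_mul, coeff_mul, Finset.mul_sum,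
    ← Finset.sum_add_distrib]
  refine Finset.sum_congr rfl fun p hp => ?_
  rw [Finset.HasAntidiagonal.mem_antidiagonal] at hp
  rw [coeff_theta, coeff_theta, ← hp]
  push_cast
  ring

lemma eq_of_theta {f g : PowerSeries ℚ} (h0 : constantCoeff f = constantCoeff g)
    (h : theta f = theta g) : f = g := by
  ext n
  cases n with
  | zero => simpa [coeff_zero_eq_constantCoeff] using h0
  | succ n =>
    have := congrArg (coeff (n + 1)) h
    rw [coeff_theta, coeff_theta] at this
    have hn : ((n : ℚ) + 1) ≠ 0 := by positivity
    field_simp at this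
    linarith

noncomputable def LiW (w : List Bool) : PowerSeries ℚ := Li (wordToIndex w)

/-- `M = z/(1-z)`. -/
noncomputable def M : PowerSeries ℚ := PowerSeries.mk fun n => if n = 0 then 0 else 1

lemma constantCoeff_Li_cons (a : ℕ) (as : List ℕ) : constantCoeff (Li (a :: as)) = 0 := by
  rw [← coeff_zero_eq_constantCoeff]
  simp [Li]

lemma coeff_Li_cons (a : ℕ) (as : List ℕ) (n : ℕ) :
    coeff n (Li (a :: as)) = if n = 0 then 0 else zetaN (n - 1) as / (n : ℚ) ^ a := by
  simp [Li]

lemma zetaN_eq_sum (as : List ℕ) (N : ℕ) :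
    zetaN N as = ∑ j ∈ Finset.range (N + 1), coeff j (Li as) := by
  cases as with
  | nil =>
    simp [zetaN, Li, PowerSeries.coeff_one]
  | cons a as =>
    rw [zetaN]
    have hins : Finset.range (N+1) = insert 0 (Finset.Ico 1 (N+1)) := by
      ext j; simp; omega
    rw [hins, Finset.sum_insert (by simp)]
    rw [coeff_Li_cons]
    norm_num
    rw [← Finset.Ico_add_one_right_eq_Icc]
    refine Finset.sum_congr rfl fun j hj => ?_
    rw [Finset.mem_Ico] at hj
    rw [coeff_Li_cons, if_neg (by omega)]

lemma aux_sum (f : ℕ → ℚ) (n : ℕ) :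
    (∑ x ∈ Finset.range (n + 1 + 1), if x = 0 then 0 else f (n + 1 - x)) =
      ∑ j ∈ Finset.range (n + 1), f j := by
  rw [Finset.sum_range_succ']
  simp only [Nat.succ_ne_zero, if_false, if_pos rfl, add_zero]
  rw [show (∑ x ∈ Finset.range (n + 1), f (n + 1 - (x + 1))) =
      ∑ x ∈ Finset.range (n + 1), f (n + 1 - 1 - x) by
    exact Finset.sum_congr rfl fun x _ => by rw [show n + 1 - (x + 1) = n + 1 - 1 - x by omega]]
  rw [Finset.sum_range_reflect f (n + 1)]
  simp

lemma theta_Li_one (as : List ℕ) : theta (Li (1 :: as)) = M * Li as := by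
  ext n
  rw [coeff_theta, coeff_mul]
  cases n with
  | zero => simp [coeff_Li_cons, M]
  | succ n =>
    rw [coeff_Li_cons, if_neg (Nat.succ_ne_zero n)]
    rw [pow_one]
    have hn : ((n : ℚ) + 1) ≠ 0 := by positivity
    push_cast
    rw [mul_comm, div_mul_cancel₀ _ hn, zetaN_eq_sum]
    rw [Finset.Nat.sum_antidiagonal_eq_sum_range_succ_mk]
    simp only [M, coeff_mk, ite_mul, zero_mul, one_mul]
    exact (aux_sum (fun j => coeff j (Li as)) n).symm


lemma theta_Li_succ (c : ℕ) (cs : List ℕ) :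
    theta (Li ((c + 1) :: cs)) = Li (c :: cs) := by
  ext n
  rw [coeff_theta, coeff_Li_cons, coeff_Li_cons]
  cases n with
  | zero => simp
  | succ n =>
    rw [if_neg (Nat.succ_ne_zero n), if_neg (Nat.succ_ne_zero n)]
    have hn : ((n : ℚ) + 1) ≠ 0 := by positivity
    push_cast
    rw [pow_succ]
    field_simp

lemma wordToIndex_true (w : List Bool) : wordToIndex (true :: w) = 1 :: wordToIndex w := rfl

lemma wordToIndex_false {w : List Bool} {c : ℕ} {cs : List ℕ} (h : wordToIndex w = c :: cs) :
    wordToIndex (false :: w) = (c + 1) :: cs := by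
  simp [wordToIndex, h]

lemma wordToIndex_ne_nil {w : List Bool} (h : true ∈ w) :
    ∃ c cs, wordToIndex w = c :: cs := by
  induction w with
  | nil => simp at h
  | cons x w ih =>
    cases x with
    | true => exact ⟨1, wordToIndex w, rfl⟩
    | false =>
      have hw : true ∈ w := by simpa using h
      obtain ⟨c, cs, hc⟩ := ih hw
      exact ⟨c + 1, cs, wordToIndex_false hc⟩

noncomputable def g (b : Bool) : PowerSeries ℚ := if b then M else 1

lemma theta_LiW_cons (x : Bool) (w : List Bool) (h : x = true ∨ true ∈ w) :
    theta (LiW (x :: w)) = g x * LiW w := by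
  cases x with
  | true =>
    rw [LiW, wordToIndex_true, theta_Li_one]
    rfl
  | false =>
    have hw : true ∈ w := h.resolve_left (by simp)
    obtain ⟨c, cs, hc⟩ := wordToIndex_ne_nil hw
    rw [LiW, wordToIndex_false hc, theta_Li_succ, LiW, hc]
    simp [g]

lemma constantCoeff_LiW {w : List Bool} (h : true ∈ w) :
    constantCoeff (LiW w) = 0 := by
  obtain ⟨c, cs, hc⟩ := wordToIndex_ne_nil h
  rw [LiW, hc, constantCoeff_Li_cons]

lemma shuffle_nil_left {α : Type*} (v : List α) : shuffle [] v = {v} := by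
  rw [shuffle]

lemma shuffle_nil_right {α : Type*} (u : List α) : shuffle u [] = {u} := by
  cases u with
  | nil => rw [shuffle]
  | cons x xs => rw [shuffle]; simp

lemma mem_shuffle {α : Type*} {x : α} :
    ∀ (u v : List α), (x ∈ u ∨ x ∈ v) → ∀ s ∈ shuffle u v, x ∈ s := by
  intro u v
  induction u, v using shuffle.induct with
  | case1 ys =>
    intro h s hs
    rw [shuffle_nil_left, Multiset.mem_singleton] at hs
    subst hs
    simpa using h
  | case2 xs _ =>
    intro h s hs
    rw [shuffle_nil_right, Multiset.mem_singleton] at hs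
    subst hs
    simpa using h
  | case3 a xs b ys ih1 ih2 =>
    intro h s hs
    rw [shuffle, Multiset.mem_add] at hs
    rcases hs with hs | hs
    · rw [Multiset.mem_map] at hs
      obtain ⟨t, ht, rfl⟩ := hs
      rcases h with h | h
      · rcases List.mem_cons.mp h with rfl | h
        · exact List.mem_cons_self
        · exact List.mem_cons_of_mem _ (ih1 (Or.inl h) t ht)
      · exact List.mem_cons_of_mem _ (ih1 (Or.inr h) t ht)
    · rw [Multiset.mem_map] at hs
      obtain ⟨t, ht, rfl⟩ := hs
      rcases h with h | h
      · exact List.mem_cons_of_mem _ (ih2 (Or.inl h) t ht)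
      · rcases List.mem_cons.mp h with rfl | h
        · exact List.mem_cons_self
        · exact List.mem_cons_of_mem _ (ih2 (Or.inr h) t ht)

/-- "ends in `true` or empty". -/
def ET (w : List Bool) : Prop := w = [] ∨ ∃ w', w = w' ++ [true]

lemma ET_tail {x : Bool} {u : List Bool} (h : ET (x :: u)) : ET u := by
  rcases h with h | ⟨w', hw⟩
  · simp at h
  · cases w' with
    | nil => simp at hw; exact Or.inl hw.2
    | cons a w'' =>
      simp at hw
      exact Or.inr ⟨w'', hw.2⟩

lemma ET_mem {u : List Bool} (h : ET u) (hne : u ≠ []) : true ∈ u := by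
  rcases h with rfl | ⟨w', rfl⟩
  · exact absurd rfl hne
  · simp

lemma ET_head {x : Bool} {u : List Bool} (h : ET (x :: u)) : x = true ∨ true ∈ u := by
  rcases h with h | ⟨w', hw⟩
  · simp at h
  · cases w' with
    | nil => simp at hw; exact Or.inl hw.1
    | cons a w'' =>
      simp at hw
      exact Or.inr (hw.2 ▸ (by simp))


lemma key : ∀ (N : ℕ) (u v : List Bool), u.length + v.length ≤ N → ET u → ET v →
    LiW u * LiW v = ((shuffle u v).map LiW).sum := by
  intro N
  induction N with
  | zero =>
    intro u v hN _ _
    have hu : u = [] := by cases u <;> simp_all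
    have hv : v = [] := by cases v <;> simp_all
    subst hu; subst hv
    simp [shuffle_nil_left, LiW, wordToIndex, Li]
  | succ N ih =>
    intro u v hN hu hv
    cases u with
    | nil =>
      rw [shuffle_nil_left]
      simp [LiW, wordToIndex, Li]
    | cons x u' =>
      cases v with
      | nil =>
        rw [shuffle_nil_right]
        simp [LiW]
        rw [show wordToIndex ([] : List Bool) = [] from rfl, show Li [] = 1 from rfl, mul_one]
      | cons y v' =>
        -- key memberships
        have htu : true ∈ x :: u' := ET_mem hu (by simp)
        have htv : true ∈ y :: v' := ET_mem hv (by simp)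
        apply eq_of_theta
        · rw [map_mul, constantCoeff_LiW htu, zero_mul,
            map_multiset_sum (constantCoeff), Multiset.map_map]
          symm
          apply Multiset.sum_eq_zero
          intro z hz
          rw [Multiset.mem_map] at hz
          obtain ⟨s, hs, rfl⟩ := hz
          exact constantCoeff_LiW (mem_shuffle _ _ (Or.inl htu) s hs)
        · rw [theta_mul, theta_LiW_cons x u' (ET_head hu), theta_LiW_cons y v' (ET_head hv)]
          have ih1 : LiW u' * LiW (y :: v') = ((shuffle u' (y :: v')).map LiW).sum :=
            ih u' (y :: v') (by simp at hN ⊢; omega) (ET_tail hu) hv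
          have ih2 : LiW (x :: u') * LiW v' = ((shuffle (x :: u') v').map LiW).sum :=
            ih (x :: u') v' (by simp at hN ⊢; omega) hu (ET_tail hv)
          rw [mul_assoc, ih1, show LiW (x :: u') * (g y * LiW v') =
            g y * (LiW (x :: u') * LiW v') by ring, ih2]
          rw [show shuffle (x :: u') (y :: v') =
            ((shuffle u' (y :: v')).map (x :: ·)) + ((shuffle (x :: u') v').map (y :: ·))
            from by rw [shuffle]]
          rw [Multiset.map_add, Multiset.sum_add, map_add, Multiset.map_map, Multiset.map_map,
            map_multiset_sum theta, map_multiset_sum theta, Multiset.map_map, Multiset.map_map]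
          congr 1
          · rw [← Multiset.sum_map_mul_left]
            apply congrArg
            apply Multiset.map_congr rfl
            intro s hs
            exact (theta_LiW_cons x s (Or.inr (mem_shuffle _ _ (Or.inr htv) s hs))).symm
          · rw [← Multiset.sum_map_mul_left]
            apply congrArg
            apply Multiset.map_congr rfl
            intro s hs
            exact (theta_LiW_cons y s (Or.inr (mem_shuffle _ _ (Or.inl htu) s hs))).symm

lemma wordOf_cons (c : ℕ) (as : List ℕ) :
    wordOf (c :: as) = List.replicate (c - 1) false ++ true :: wordOf as := by
  simp [wordOf]

lemma wordToIndex_replicate (k : ℕ) (w : List Bool) :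
    wordToIndex (List.replicate k false ++ true :: w) = (k + 1) :: wordToIndex w := by
  induction k with
  | zero => rfl
  | succ k ihk =>
    rw [List.replicate_succ, List.cons_append, wordToIndex_false ihk]

lemma wordToIndex_wordOf (a : List ℕ) (ha : ∀ x ∈ a, 1 ≤ x) :
    wordToIndex (wordOf a) = a := by
  induction a with
  | nil => rfl
  | cons c as iha =>
    rw [wordOf_cons, wordToIndex_replicate, iha (fun x hx => ha x (by simp [hx]))]
    have : 1 ≤ c := ha c (by simp)
    congr 1
    omega

lemma ET_wordOf (a : List ℕ) : ET (wordOf a) := by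
  induction a with
  | nil => exact Or.inl rfl
  | cons c as iha =>
    rw [wordOf_cons]
    rcases iha with h | ⟨w', hw⟩
    · exact Or.inr ⟨List.replicate (c - 1) false, by rw [h]⟩
    · exact Or.inr ⟨List.replicate (c - 1) false ++ true :: w', by rw [hw]; simp⟩

/-- The shuffle identity for multiple polylogarithms:
`Li_a(z) · Li_b(z) = Li_{a ⧢ b}(z)`, with `Li` extended linearly over
the words of the shuffle product. -/
theorem polylog_shuffle (a b : List ℕ) (ha : ∀ x ∈ a, 1 ≤ x) (hb : ∀ x ∈ b, 1 ≤ x) :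
    Li a * Li b =
      ((shuffle (wordOf a) (wordOf b)).map (fun w => Li (wordToIndex w))).sum := by
  have h := key ((wordOf a).length + (wordOf b).length) (wordOf a) (wordOf b) le_rfl
    (ET_wordOf a) (ET_wordOf b)
  rw [LiW, LiW, wordToIndex_wordOf a ha, wordToIndex_wordOf b hb] at h
  exact h
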